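/- arXiv:1811.06718 — 2 statements merged into one kernel-verified Lean document; each statement's English description precedes it below -/
import Mathlib

section
/- Let A, B, C be integers with 1 ≤ A ≤ B < C. Then every complex root z of the polynomial x³ + Ax² + Bx + C satisfies |z| > 1. Consequently, any 3×3 integer matrix with characteristic polynomial x³ + Ax² + Bx + C is expanding (each of its eigenvalues is greater than 1 in modulus). -/
open MeasureTheory

noncomputable def Mmat (A B C : ℤ) : Matrix (Fin 3) (Fin 3) ℝ :=
  !![0, 0, -(C : ℝ); 1, 0, -(B : ℝ); 0, 1, -(A : ℝ)]

def Ddig (C : ℤ) : Set (Fin 3 → ℝ) :=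
  {d | ∃ i : ℤ, 0 ≤ i ∧ i < C ∧ d = ![(i : ℝ), 0, 0]}

def toR (α : Fin 3 → ℤ) : Fin 3 → ℝ := fun i => (α i : ℝ)

def tileTranslate (v : Fin 3 → ℝ) (T : Set (Fin 3 → ℝ)) : Set (Fin 3 → ℝ) :=
  (fun x => x + v) '' T

def IsABCTile (A B C : ℤ) (T : Set (Fin 3 → ℝ)) : Prop :=
  1 ≤ A ∧ A ≤ B ∧ B < C ∧
  T.Nonempty ∧ IsCompact T ∧ 0 < volume T ∧
  (Mmat A B C).mulVec '' T = ⋃ d ∈ Ddig C, tileTranslate d T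

def Neighbors (T : Set (Fin 3 → ℝ)) : Set (Fin 3 → ℤ) :=
  {α | α ≠ 0 ∧ (T ∩ tileTranslate (toR α) T).Nonempty}

/-!
Eneström–Kakeya argument: if `p = ∑ aₖ zᵏ` with `a₀ > a₁ ≥ ⋯ ≥ aₙ > 0`, then `(1 - z) p(z) = 0`
rewrites `a₀` as `∑ (aₖ - aₖ₊₁) zᵏ⁺¹ + aₙ zⁿ⁺¹`, a combination with nonnegative weights of total
mass `a₀`. For `‖z‖ ≤ 1` every `Re zᵐ` is at most `1`, and `Re z < 1` unless `z = 1`, so taking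
real parts gives `a₀ < a₀`; and `z = 1` is not a root since `p(1) > 0`.
-/

open Finset ComplexOrder

lemma one_sub_mul_sum_range_eq {R : Type*} [CommRing R] (a : ℕ → R) (n : ℕ) (z : R) :
    (1 - z) * ∑ k ∈ range (n + 1), a k * z ^ k =
      a 0 - ∑ k ∈ range n, (a k - a (k + 1)) * z ^ (k + 1) - a n * z ^ (n + 1) := by
  induction n with
  | zero => rw [zero_add, sum_range_one, range_zero, sum_empty]; ring
  | succ n ih => rw [sum_range_succ, mul_add, ih, sum_range_succ]; ring

lemma Complex.re_pow_le_one {z : ℂ} (hz : ‖z‖ ≤ 1) (m : ℕ) : (z ^ m).re ≤ 1 :=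
  (re_le_norm _).trans (by rw [norm_pow]; exact pow_le_one₀ (norm_nonneg z) hz)

lemma Complex.re_lt_one_of_norm_le_one {z : ℂ} (hz : ‖z‖ ≤ 1) (hz1 : z ≠ 1) : z.re < 1 := by
  refine (re_le_norm z |>.trans hz).lt_of_ne fun hre => hz1 (ext hre ?_)
  have hnonneg : 0 ≤ z := re_eq_norm.mp (hre.trans (le_antisymm hz (hre ▸ re_le_norm z)).symm)
  exact (nonneg_iff.mp hnonneg).2.symm

theorem one_lt_norm_of_antitoneOn_coeff {a : ℕ → ℝ} {n : ℕ} (hn : 0 < n)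
    (ha : AntitoneOn a (Set.Iic n)) (h10 : a 1 < a 0) (hpos : 0 < a n) {z : ℂ}
    (hz : ∑ k ∈ range (n + 1), (a k : ℂ) * z ^ k = 0) : 1 < ‖z‖ := by
  by_contra! hle
  have hz1 : z ≠ 1 := by
    rintro rfl
    have hsum : 0 < ∑ k ∈ range (n + 1), a k := by
      refine sum_pos (fun k hk => hpos.trans_le ?_) nonempty_range_add_one
      have hkn : k ≤ n := Nat.lt_succ_iff.mp (mem_range.mp hk)
      exact ha hkn (Set.mem_Iic.mpr le_rfl) hkn
    simp only [one_pow, mul_one] at hz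
    norm_cast at hz
    exact hsum.ne' hz
  have hre := congrArg Complex.re (one_sub_mul_sum_range_eq (fun k => (a k : ℂ)) n z)
  simp only [hz, mul_zero, Complex.zero_re, Complex.sub_re, Complex.re_sum, ← Complex.ofReal_sub,
    Complex.re_ofReal_mul, Complex.ofReal_re] at hre
  have hlt : ∑ k ∈ range n, (a k - a (k + 1)) * (z ^ (k + 1)).re <
      ∑ k ∈ range n, (a k - a (k + 1)) := by
    refine sum_lt_sum (fun k hk => ?_) ⟨0, mem_range.mpr hn, ?_⟩
    · have hkn : k < n := mem_range.mp hk
      exact mul_le_of_le_one_right (sub_nonneg.mpr (ha hkn.le hkn k.le_succ))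
        (Complex.re_pow_le_one hle _)
    · simpa using
        mul_lt_of_lt_one_right (sub_pos.mpr h10) (Complex.re_lt_one_of_norm_le_one hle hz1)
  have htop : a n * (z ^ (n + 1)).re ≤ a n :=
    mul_le_of_le_one_right hpos.le (Complex.re_pow_le_one hle _)
  rw [sum_range_sub'] at hlt
  linarith

lemma one_lt_norm_of_cubic_eq_zero {A B C : ℝ} (h1 : 1 ≤ A) (h2 : A ≤ B) (h3 : B < C) {z : ℂ}
    (hz : z ^ 3 + A * z ^ 2 + B * z + C = 0) : 1 < ‖z‖ := by
  refine one_lt_norm_of_antitoneOn_coeff (a := fun k => [C, B, A, 1].getD k 0) (n := 3)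
    (by norm_num) (antitoneOn_of_add_one_le Set.ordConnected_Iic fun k _ _ hk => ?_) h3 one_pos ?_
  · have : k < 3 := by simpa using hk
    interval_cases k
    · exact h3.le
    · exact h2
    · exact h1
  · rw [← hz]; simp [sum_range_succ]; ring

theorem stmt0 (A B C : ℤ) (h1 : 1 ≤ A) (h2 : A ≤ B) (h3 : B < C) :
    (∀ z : ℂ, z ^ 3 + (A : ℂ) * z ^ 2 + (B : ℂ) * z + (C : ℂ) = 0 → 1 < ‖z‖) ∧
    (∀ M : Matrix (Fin 3) (Fin 3) ℤ,
      M.charpoly = Polynomial.X ^ 3 + Polynomial.C A * Polynomial.X ^ 2 +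
        Polynomial.C B * Polynomial.X + Polynomial.C C →
      ∀ z : ℂ, ((M.charpoly).map (Int.castRingHom ℂ)).IsRoot z → 1 < ‖z‖) := by
  have hroot : ∀ z : ℂ, z ^ 3 + (A : ℂ) * z ^ 2 + (B : ℂ) * z + (C : ℂ) = 0 → 1 < ‖z‖ :=
    fun z hz => one_lt_norm_of_cubic_eq_zero (A := A) (B := B) (C := C)
      (by exact_mod_cast h1) (by exact_mod_cast h2) (by exact_mod_cast h3) (by push_cast; exact hz)
  refine ⟨hroot, fun M hM z hz => hroot z ?_⟩
  simpa [hM, Polynomial.IsRoot, Polynomial.eval_map] using hz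
end

section
/- Let T be an ABC-tile with 1 ≤ A = B < C. Then the lattice points s₁ = (2A−1, A+1, 1) and s₂ = (−1, A−1, 1) are neighbors of T, i.e. T ∩ (T + s₁) ≠ ∅ and T ∩ (T + s₂) ≠ ∅ (and by symmetry the same holds for −s₁ and −s₂). -/
open MeasureTheory

/-! The inverse `N = M⁻¹` satisfies `Nⁿ → 0`: its eigenvalues are the reciprocals of the roots of
`x³ + Ax² + Bx + C`, and multiplying that polynomial by `1 - x` and comparing real parts (as in the
Eneström–Kakeya theorem) shows that these roots lie outside the closed unit disk.

The set equation says that `T` is invariant under the maps `x ↦ N(x + d)`, `d ∈ D`. If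
`α₀, α₁, …` is a bounded walk with `Mαₙ - αₙ₊₁ ∈ D - D`, applying these maps along the two digit
sequences to one point of `T` gives points `yₙ, zₙ ∈ T` with `yₙ - zₙ = α₀ - Nⁿαₙ → α₀`, so
`α₀ ∈ T - T` by compactness. For `A = B` the points `s₁ → s₂ → -s₁ → -s₂ → s₁` form such a walk. -/

open Filter Topology Matrix
open scoped Pointwise

theorem tendsto_pow_atTop_nhds_zero_of_spectralRadius_lt_one {A : Type*} [NormedRing A]
    [NormedAlgebra ℂ A] [CompleteSpace A] (a : A) (h : spectralRadius ℂ a < 1) :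
    Tendsto (a ^ ·) atTop (𝓝 0) := by
  obtain ⟨r, hρr, hr1⟩ := ENNReal.lt_iff_exists_nnreal_btwn.1 h
  have hr1 : (r : ℝ) < 1 := by exact_mod_cast hr1
  refine squeeze_zero_norm' ?_ (tendsto_pow_atTop_nhds_zero_of_lt_one r.coe_nonneg hr1)
  filter_upwards [(spectrum.pow_norm_pow_one_div_tendsto_nhds_spectralRadius a).eventually_lt_const
    hρr, eventually_ne_atTop 0] with n hn hn0
  rw [ENNReal.ofReal_lt_iff_lt_toReal (by positivity) ENNReal.coe_ne_top, ENNReal.coe_toReal,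
    one_div] at hn
  calc ‖a ^ n‖ = (‖a ^ n‖ ^ (n⁻¹ : ℝ)) ^ n := (Real.rpow_inv_natCast_pow (norm_nonneg _) hn0).symm
    _ ≤ r ^ n := pow_le_pow_left₀ (by positivity) hn.le n

theorem Matrix.tendsto_pow_of_norm_lt_one_of_mem_spectrum {m : Type*} [Fintype m] [DecidableEq m]
    (N : Matrix m m ℝ) (h : ∀ z ∈ spectrum ℂ (N.map Complex.ofReal), ‖z‖ < 1) :
    Tendsto (N ^ ·) atTop (𝓝 0) := by
  let _ := Matrix.linftyOpNormedRing (n := m) (α := ℂ)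
  let _ := Matrix.linftyOpNormedAlgebra (n := m) (R := ℂ) (α := ℂ)
  have hcomplete : CompleteSpace (Matrix m m ℂ) := FiniteDimensional.complete ℂ _
  rcases isEmpty_or_nonempty m with hm | hm
  · exact tendsto_const_nhds.congr fun n => Subsingleton.elim _ _
  have hρ : spectralRadius ℂ (N.map Complex.ofReal) < 1 := by
    simpa using spectrum.spectralRadius_lt_of_forall_lt _ (r := 1) fun z hz => by
      simpa [← NNReal.coe_lt_coe] using h z hz
  have hre := ((continuous_id.matrix_map Complex.continuous_re).tendsto 0).comp
    (tendsto_pow_atTop_nhds_zero_of_spectralRadius_lt_one _ hρ)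
  convert hre using 2 with n
  · change N ^ n = (Complex.ofRealHom.mapMatrix N ^ n).map Complex.re
    rw [← map_pow, RingHom.mapMatrix_apply, Matrix.map_map]
    ext i j
    simp
  · simp

theorem cubic_ne_zero_of_norm_le_one {a b c : ℝ} (ha : 1 ≤ a) (hab : a ≤ b) (hbc : b < c) {z : ℂ}
    (hz : ‖z‖ ≤ 1) : z ^ 3 + a * z ^ 2 + b * z + c ≠ 0 := by
  intro hroot
  have hre_pow : ∀ k : ℕ, (z ^ k).re ≤ 1 := fun k =>
    (Complex.re_le_norm _).trans (by rw [norm_pow]; exact pow_le_one₀ (norm_nonneg _) hz)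
  have hc : (c : ℂ) = (c - b) * z + (b - a) * z ^ 2 + (a - 1) * z ^ 3 + z ^ 4 := by
    linear_combination (1 - z) * hroot
  have hc_re := congrArg Complex.re hc
  simp only [Complex.ofReal_re, Complex.add_re, Complex.mul_re, Complex.sub_re, Complex.sub_im,
    Complex.ofReal_im, Complex.one_re, Complex.one_im, sub_zero, zero_mul] at hc_re
  have hz_re : 1 ≤ z.re := by
    nlinarith [hre_pow 1, hre_pow 2, hre_pow 3, hre_pow 4]
  have hz_one : z = 1 := by
    have hre : z.re = 1 := le_antisymm ((Complex.re_le_norm z).trans hz) hz_re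
    have him : z.im = 0 := Complex.abs_re_eq_norm.1 <|
      le_antisymm (Complex.abs_re_le_norm z) (hz.trans (by simp [hre]))
    exact Complex.ext (by simp [hre]) (by simp [him])
  subst hz_one
  have := congrArg Complex.re hroot
  norm_num at this
  linarith

noncomputable def Nmat (A B C : ℤ) : Matrix (Fin 3) (Fin 3) ℝ :=
  !![-(B : ℝ) / C, 1, 0; -(A : ℝ) / C, 0, 1; -1 / (C : ℝ), 0, 0]

theorem Nmat_mul_Mmat {A B C : ℤ} (hC : C ≠ 0) : Nmat A B C * Mmat A B C = 1 := by
  have hC : (C : ℝ) ≠ 0 := by exact_mod_cast hC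
  ext i j
  fin_cases i <;> fin_cases j <;>
    simp [Nmat, Mmat, Matrix.mul_apply, Fin.sum_univ_three] <;>
    field_simp <;>
    ring

theorem poly_eq_zero_of_mem_spectrum_Nmat {A B C : ℤ} (hC : C ≠ 0) {z : ℂ}
    (hz : z ∈ spectrum ℂ ((Nmat A B C).map Complex.ofReal)) :
    C * z ^ 3 + B * z ^ 2 + A * z + 1 = 0 := by
  have hC : (C : ℂ) ≠ 0 := by exact_mod_cast hC
  rw [spectrum.mem_iff, Matrix.isUnit_iff_isUnit_det, isUnit_iff_ne_zero, not_not,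
    Matrix.algebraMap_eq_diagonal, Matrix.det_fin_three] at hz
  simp [Nmat, Matrix.diagonal] at hz
  field_simp at hz
  linear_combination hz

theorem norm_lt_one_of_mem_spectrum_Nmat {A B C : ℤ} (hA : 1 ≤ A) (hAB : A ≤ B) (hBC : B < C)
    {z : ℂ} (hz : z ∈ spectrum ℂ ((Nmat A B C).map Complex.ofReal)) : ‖z‖ < 1 := by
  have hpoly := poly_eq_zero_of_mem_spectrum_Nmat (by omega) hz
  have hz0 : z ≠ 0 := by rintro rfl; simp at hpoly
  by_contra! hz1
  refine cubic_ne_zero_of_norm_le_one (a := A) (b := B) (c := C) (by exact_mod_cast hA)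
    (by exact_mod_cast hAB) (by exact_mod_cast hBC) (z := z⁻¹) ?_ ?_
  · rw [norm_inv]; exact inv_le_one_of_one_le₀ hz1
  · push_cast
    field_simp
    linear_combination hpoly

theorem tendsto_Nmat_pow {A B C : ℤ} (hA : 1 ≤ A) (hAB : A ≤ B) (hBC : B < C) :
    Tendsto (Nmat A B C ^ ·) atTop (𝓝 0) :=
  (Nmat A B C).tendsto_pow_of_norm_lt_one_of_mem_spectrum fun _ =>
    norm_lt_one_of_mem_spectrum_Nmat hA hAB hBC

theorem Matrix.tendsto_mulVec_zero_of_isBounded {m n : Type*} [Fintype m] [Fintype n]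
    {N : ℕ → Matrix m n ℝ} (hN : Tendsto N atTop (𝓝 0)) {v : ℕ → n → ℝ}
    (hv : Bornology.IsBounded (Set.range v)) : Tendsto (fun k => N k *ᵥ v k) atTop (𝓝 0) := by
  let _ := Matrix.linftyOpNormedAddCommGroup (m := m) (n := n) (α := ℝ)
  obtain ⟨R, hR⟩ := isBounded_iff_forall_norm_le.1 hv
  have hN' : Tendsto (fun k => ‖N k‖ * R) atTop (𝓝 0) := by
    simpa using (tendsto_norm_zero.comp hN).mul_const R
  refine squeeze_zero_norm (fun k => (linfty_opNorm_mulVec _ _).trans ?_) hN'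
  exact mul_le_mul_of_nonneg_left (hR _ (Set.mem_range_self k)) (norm_nonneg _)

section DigitWalk

variable {m : Type*} [Fintype m] [DecidableEq m] {M N : Matrix m m ℝ} {T D : Set (m → ℝ)}

theorem sum_pow_mulVec_add_pow_mulVec_mem (hT : ∀ x ∈ T, ∀ d ∈ D, N *ᵥ (x + d) ∈ T)
    {a : ℕ → m → ℝ} (ha : ∀ k, a k ∈ D) {x : m → ℝ} (hx : x ∈ T) (n : ℕ) :
    (∑ k ∈ Finset.range n, N ^ (k + 1) *ᵥ a k) + N ^ n *ᵥ x ∈ T := by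
  induction n generalizing x with
  | zero => simpa using hx
  | succ n ih =>
    convert ih (hT x hx (a n) (ha n)) using 1
    rw [Finset.sum_range_succ, mulVec_mulVec, ← pow_succ, mulVec_add, pow_succ]
    abel

theorem mem_sub_self_of_isBounded_walk (hNM : N * M = 1) (hN : Tendsto (N ^ ·) atTop (𝓝 0))
    (hTc : IsCompact T) (hTne : T.Nonempty) (hT : ∀ x ∈ T, ∀ d ∈ D, N *ᵥ (x + d) ∈ T)
    {α : ℕ → m → ℝ} (hα : Bornology.IsBounded (Set.range α))
    (hstep : ∀ n, M *ᵥ α n - α (n + 1) ∈ D - D) : α 0 ∈ T - T := by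
  choose a ha b hb hab using hstep
  beta_reduce at hab
  obtain ⟨x, hx⟩ := hTne
  have hdiff : ∀ n, ((∑ k ∈ Finset.range n, N ^ (k + 1) *ᵥ a k) + N ^ n *ᵥ x) -
      ((∑ k ∈ Finset.range n, N ^ (k + 1) *ᵥ b k) + N ^ n *ᵥ x) = α 0 - N ^ n *ᵥ α n := by
    intro n
    calc _ = ∑ k ∈ Finset.range n, (N ^ k *ᵥ α k - N ^ (k + 1) *ᵥ α (k + 1)) := by
          rw [add_sub_add_right_eq_sub, ← Finset.sum_sub_distrib]
          refine Finset.sum_congr rfl fun k _ => ?_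
          rw [← mulVec_sub, hab, mulVec_sub, mulVec_mulVec, pow_succ, mul_assoc, hNM, mul_one]
      _ = α 0 - N ^ n *ᵥ α n := by
          simpa using Finset.sum_range_sub' (fun k => N ^ k *ᵥ α k) n
  have hlim : Tendsto (fun n => α 0 - N ^ n *ᵥ α n) atTop (𝓝 (α 0)) := by
    simpa using tendsto_const_nhds.sub (tendsto_mulVec_zero_of_isBounded hN hα)
  have hcompact : IsCompact (T - T) := by
    rw [← Set.sub_image_prod]
    exact (hTc.prod hTc).image continuous_sub
  refine hcompact.isClosed.mem_of_tendsto hlim (Eventually.of_forall fun n => ?_)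
  rw [← hdiff]
  exact Set.sub_mem_sub (sum_pow_mulVec_add_pow_mulVec_mem hT ha hx n)
    (sum_pow_mulVec_add_pow_mulVec_mem hT hb hx n)

theorem mem_sub_self_of_finite_walk (hNM : N * M = 1) (hN : Tendsto (N ^ ·) atTop (𝓝 0))
    (hTc : IsCompact T) (hTne : T.Nonempty) (hT : ∀ x ∈ T, ∀ d ∈ D, N *ᵥ (x + d) ∈ T)
    {ι : Type*} [Finite ι] {σ : ι → ι} {β : ι → m → ℝ} (hβ : ∀ i, M *ᵥ β i - β (σ i) ∈ D - D)
    (i : ι) : β i ∈ T - T := by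
  have hbdd : Bornology.IsBounded (Set.range fun n => β (σ^[n] i)) :=
    (Set.finite_range β).isBounded.subset (Set.range_comp_subset_range _ β)
  simpa using mem_sub_self_of_isBounded_walk hNM hN hTc hTne hT hbdd fun n => by
    simpa [Function.iterate_succ_apply'] using hβ (σ^[n] i)

end DigitWalk

theorem inter_tileTranslate_nonempty_iff {T : Set (Fin 3 → ℝ)} {v : Fin 3 → ℝ} :
    (T ∩ tileTranslate v T).Nonempty ↔ v ∈ T - T := by
  constructor
  · rintro ⟨_, hy, t, ht, rfl⟩
    exact ⟨t + v, hy, t, ht, add_sub_cancel_left t v⟩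
  · rintro ⟨y, hy, t, ht, rfl⟩
    exact ⟨y, hy, t, ht, add_sub_cancel t y⟩

theorem vecCons_mem_Ddig_sub_Ddig {C j : ℤ} (hj : |j| < C) :
    ![(j : ℝ), 0, 0] ∈ Ddig C - Ddig C := by
  obtain ⟨hj₁, hj₂⟩ := abs_lt.1 hj
  have hzero : (0 : Fin 3 → ℝ) ∈ Ddig C := ⟨0, le_rfl, by omega, by ext k; fin_cases k <;> simp⟩
  rcases le_total 0 j with h | h
  · exact ⟨_, ⟨j, h, hj₂, rfl⟩, 0, hzero, sub_zero _⟩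
  · refine ⟨0, hzero, _, ⟨-j, by omega, by omega, rfl⟩, ?_⟩
    ext k
    fin_cases k <;> simp

namespace IsABCTile

variable {A B C : ℤ} {T : Set (Fin 3 → ℝ)}

theorem Nmat_mulVec_add_mem (hT : IsABCTile A B C T) {x d : Fin 3 → ℝ} (hx : x ∈ T)
    (hd : d ∈ Ddig C) : Nmat A B C *ᵥ (x + d) ∈ T := by
  obtain ⟨hA, hAB, hBC, -, -, -, hset⟩ := hT
  obtain ⟨t, ht, hMt⟩ : x + d ∈ (Mmat A B C).mulVec '' T :=
    hset ▸ Set.mem_biUnion hd ⟨x, hx, rfl⟩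
  rwa [← hMt, mulVec_mulVec, Nmat_mul_Mmat (by omega), one_mulVec]

theorem mem_sub_self_of_finite_walk (hT : IsABCTile A B C T) {ι : Type*} [Finite ι]
    {σ : ι → ι} {β : ι → Fin 3 → ℝ} (hβ : ∀ i, Mmat A B C *ᵥ β i - β (σ i) ∈ Ddig C - Ddig C)
    (i : ι) : β i ∈ T - T := by
  have ⟨hA, hAB, hBC, hne, hcompact, _⟩ := hT
  exact _root_.mem_sub_self_of_finite_walk (Nmat_mul_Mmat (by omega)) (tendsto_Nmat_pow hA hAB hBC)
    hcompact hne (fun _ hx _ hd => hT.Nmat_mulVec_add_mem hx hd) hβ i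

end IsABCTile

def neighborCycle (A : ℤ) : Fin 4 → Fin 3 → ℤ :=
  ![![2 * A - 1, A + 1, 1], ![-1, A - 1, 1], -![2 * A - 1, A + 1, 1], -![-1, A - 1, 1]]

theorem Mmat_mulVec_neighborCycle_sub_mem {A C : ℤ} (hA : 1 ≤ A) (hAC : A < C) (i : Fin 4) :
    Mmat A A C *ᵥ toR (neighborCycle A i) - toR (neighborCycle A (i + 1)) ∈ Ddig C - Ddig C := by
  obtain ⟨j, hj, heq⟩ : ∃ j : ℤ, |j| < C ∧
      Mmat A A C *ᵥ toR (neighborCycle A i) - toR (neighborCycle A (i + 1)) = ![(j : ℝ), 0, 0] := by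
    fin_cases i <;>
      [refine ⟨1 - C, ?_, ?_⟩; refine ⟨2 * A - 1 - C, ?_, ?_⟩; refine ⟨C - 1, ?_, ?_⟩;
        refine ⟨C + 1 - 2 * A, ?_, ?_⟩] <;>
      first
      | (rw [abs_lt]; omega)
      | (ext k; fin_cases k <;>
          simp [Mmat, toR, neighborCycle, dotProduct, Fin.sum_univ_three] <;> ring)
  exact heq ▸ vecCons_mem_Ddig_sub_Ddig hj

theorem stmt9 (A C : ℤ) (T : Set (Fin 3 → ℝ)) (hT : IsABCTile A A C T) :
    (T ∩ tileTranslate (toR ![2 * A - 1, A + 1, 1]) T).Nonempty ∧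
    (T ∩ tileTranslate (toR ![-1, A - 1, 1]) T).Nonempty ∧
    (T ∩ tileTranslate (toR (-![2 * A - 1, A + 1, 1])) T).Nonempty ∧
    (T ∩ tileTranslate (toR (-![-1, A - 1, 1])) T).Nonempty := by
  have h (i : Fin 4) : (T ∩ tileTranslate (toR (neighborCycle A i)) T).Nonempty :=
    inter_tileTranslate_nonempty_iff.2 <| hT.mem_sub_self_of_finite_walk (σ := (· + 1))
      (Mmat_mulVec_neighborCycle_sub_mem hT.1 hT.2.2.1) i
  exact ⟨h 0, h 1, h 2, h 3⟩
end
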